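/- arXiv:0902.2518 — 3 statements merged into one kernel-verified Lean document; each statement's English description precedes it below -/
import Mathlib

section
/- Let t < T be integers, (F_s)_{s=t,...,T} a filtration, and for each s let G_s, q_s, q̂_s be F_s-measurable integrable random variables with q_s = E[θ_{s+1}(q) | F_s], where the cashflow θ is defined recursively by θ_T(q) = G_T and θ_s(q) = G_s·1{q_s ≤ G_s} + θ_{s+1}(q)·1{q_s > G_s} (and analogously θ(q̂) with thresholds q̂_s). Then for every p > 1: ‖E[θ_{t+1}(q) − θ_{t+1}(q̂) | F_t]‖_p ≤ Σ_{s=t+1}^{T} ‖q̂_s − q_s‖_p. -/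
open MeasureTheory Finset

/-- The cashflow `θ_s(q)` generated by the threshold rule `q`:
`θ_T(q) = G_T` and `θ_s(q) = G_s·1{q_s ≤ G_s} + θ_{s+1}(q)·1{q_s > G_s}` for `s < T`. -/
noncomputable def snellCashflow {Ω : Type*} (T : ℕ) (G q : ℕ → Ω → ℝ) : ℕ → Ω → ℝ
  | s => fun ω =>
    if _ : s < T then
      (if q s ω ≤ G s ω then G s ω else snellCashflow T G q (s + 1) ω)
    else G T ω
  termination_by s => T - s
  decreasing_by omega


/-! Write `Δ_s = θ_s(q) - θ_s(q̂)`. For `s < T`,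
`Δ_s = (1{q_s ≤ G_s} - 1{q̂_s ≤ G_s}) (G_s - θ_{s+1}(q)) + 1{q̂_s > G_s} Δ_{s+1}`;
conditioning on `F_s` replaces `θ_{s+1}(q)` by `q_s` in the first term, which is then
pointwise at most `|q̂_s - q_s|`. Since conditional expectation contracts `L^p`,
`‖E[Δ_s | F_s]‖_p ≤ ‖q̂_s - q_s‖_p + ‖E[Δ_{s+1} | F_{s+1}]‖_p`, and backward induction from
`Δ_T = 0` gives the bound. -/

theorem ite_le_sub_ite_le (g a b x y : ℝ) :
    (if a ≤ g then g else x) - (if b ≤ g then g else y) =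
      ((if a ≤ g then 1 else 0) - (if b ≤ g then 1 else 0)) * (g - x) +
        (if b ≤ g then 0 else 1) * (x - y) := by
  split_ifs <;> ring

theorem abs_ite_le_sub_ite_le_mul_sub_le (g a b : ℝ) :
    |((if a ≤ g then 1 else 0) - (if b ≤ g then 1 else 0)) * (g - a)| ≤ |b - a| := by
  split_ifs with ha hb hb
  · simp
  · rw [sub_zero, one_mul, abs_of_nonneg (by linarith), abs_of_pos (by linarith)]; linarith
  · rw [zero_sub, neg_one_mul, abs_neg, abs_of_neg (by linarith), abs_of_nonpos (by linarith)]
    linarith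
  · simp

theorem MeasureTheory.eLpNorm_condExp_le_of_le {α E : Type*} [NormedAddCommGroup E]
    [NormedSpace ℝ E] [CompleteSpace E] {m₁ m₂ m₀ : MeasurableSpace α} {μ : Measure α}
    (h₁₂ : m₁ ≤ m₂) (h₂ : m₂ ≤ m₀) [SigmaFinite (μ.trim h₂)] (f : α → E) {p : ENNReal}
    (hp : 1 ≤ p) : eLpNorm μ[f | m₁] p μ ≤ eLpNorm μ[f | m₂] p μ := by
  rw [← eLpNorm_congr_ae (condExp_condExp_of_le h₁₂ h₂)]
  exact eLpNorm_condExp_le_eLpNorm _ hp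

theorem MeasureTheory.StronglyMeasurable.ite_le {α : Type*} {m : MeasurableSpace α}
    {f g : α → ℝ} (hf : StronglyMeasurable[m] f) (hg : StronglyMeasurable[m] g) (a b : ℝ) :
    StronglyMeasurable[m] fun x => if f x ≤ g x then a else b :=
  .ite (hf.measurableSet_le hg) stronglyMeasurable_const stronglyMeasurable_const

section snellCashflow

variable {Ω : Type*} {T : ℕ} {G q qhat : ℕ → Ω → ℝ} {s : ℕ}

theorem snellCashflow_of_lt (h : s < T) :
    snellCashflow T G q s =
      fun ω => if q s ω ≤ G s ω then G s ω else snellCashflow T G q (s + 1) ω := by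
  rw [snellCashflow]; simp [h]

theorem snellCashflow_of_le (h : T ≤ s) : snellCashflow T G q s = G T := by
  rw [snellCashflow]; simp [h.not_gt]

theorem snellCashflow_sub_of_lt (h : s < T) :
    snellCashflow T G q s - snellCashflow T G qhat s =
      (fun ω => (if q s ω ≤ G s ω then 1 else 0) - (if qhat s ω ≤ G s ω then 1 else 0)) *
          (G s - snellCashflow T G q (s + 1)) +
        (fun ω => if qhat s ω ≤ G s ω then 0 else 1) *
          (snellCashflow T G q (s + 1) - snellCashflow T G qhat (s + 1)) := by
  funext ω
  simp only [snellCashflow_of_lt h, Pi.sub_apply, Pi.add_apply, Pi.mul_apply]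
  exact ite_le_sub_ite_le ..

variable {mΩ : MeasurableSpace Ω} {μ : Measure Ω}

theorem integrable_snellCashflow (hGm : ∀ u, Measurable (G u)) (hqm : ∀ u, Measurable (q u))
    (hG : ∀ u, Integrable (G u) μ) (s : ℕ) : Integrable (snellCashflow T G q s) μ := by
  by_cases h : s < T
  · rw [snellCashflow_of_lt h]
    exact Integrable.piecewise (s := {ω | q s ω ≤ G s ω}) (measurableSet_le (hqm s) (hGm s))
      (hG s).integrableOn
      (integrable_snellCashflow hGm hqm hG (s + 1)).integrableOn
  · rw [snellCashflow_of_le (not_lt.mp h)]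
    exact hG T
termination_by T - s

theorem condExp_snellCashflow_sub_of_lt {m : MeasurableSpace Ω} (hm : m ≤ mΩ)
    [SigmaFinite (μ.trim hm)]
    (hGm : StronglyMeasurable[m] (G s)) (hqm : StronglyMeasurable[m] (q s))
    (hqhatm : StronglyMeasurable[m] (qhat s)) (hG : Integrable (G s) μ)
    (hθq : Integrable (snellCashflow T G q (s + 1)) μ)
    (hθqhat : Integrable (snellCashflow T G qhat (s + 1)) μ)
    (hq : q s =ᵐ[μ] μ[snellCashflow T G q (s + 1) | m]) (h : s < T) :
    μ[snellCashflow T G q s - snellCashflow T G qhat s | m] =ᵐ[μ]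
      (fun ω => (if q s ω ≤ G s ω then 1 else 0) - (if qhat s ω ≤ G s ω then 1 else 0)) *
          (G s - q s) +
        (fun ω => if qhat s ω ≤ G s ω then 0 else 1) *
          μ[snellCashflow T G q (s + 1) - snellCashflow T G qhat (s + 1) | m] := by
  set χ : Ω → ℝ := fun ω =>
    (if q s ω ≤ G s ω then 1 else 0) - (if qhat s ω ≤ G s ω then 1 else 0)
  set ψ : Ω → ℝ := fun ω => if qhat s ω ≤ G s ω then 0 else 1
  have hχm : StronglyMeasurable[m] χ := (hqm.ite_le hGm 1 0).sub (hqhatm.ite_le hGm 1 0)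
  have hψm : StronglyMeasurable[m] ψ := hqhatm.ite_le hGm 0 1
  have hχi : Integrable (χ * (G s - snellCashflow T G q (s + 1))) μ :=
    (hG.sub hθq).bdd_mul (c := 1) (hχm.mono hm).aestronglyMeasurable
      (.of_forall fun ω => by simp only [χ]; split_ifs <;> simp)
  have hψi : Integrable (ψ * (snellCashflow T G q (s + 1) - snellCashflow T G qhat (s + 1))) μ :=
    (hθq.sub hθqhat).bdd_mul (c := 1) (hψm.mono hm).aestronglyMeasurable
      (.of_forall fun ω => by simp only [ψ]; split_ifs <;> simp)
  rw [snellCashflow_sub_of_lt h]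
  filter_upwards [condExp_add hχi hψi m,
    condExp_mul_of_stronglyMeasurable_left hχm hχi (hG.sub hθq),
    condExp_mul_of_stronglyMeasurable_left hψm hψi (hθq.sub hθqhat), condExp_sub hG hθq m, hq]
    with ω hadd hχ hψ hsub hqω
  simp only [Pi.add_apply, Pi.mul_apply, Pi.sub_apply] at *
  rw [hadd, hχ, hψ, hsub, condExp_of_stronglyMeasurable hm hGm hG, hqω]

theorem eLpNorm_condExp_snellCashflow_sub_le_of_lt {m : MeasurableSpace Ω} (hm : m ≤ mΩ)
    [SigmaFinite (μ.trim hm)]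
    (hGm : StronglyMeasurable[m] (G s)) (hqm : StronglyMeasurable[m] (q s))
    (hqhatm : StronglyMeasurable[m] (qhat s)) (hG : Integrable (G s) μ)
    (hθq : Integrable (snellCashflow T G q (s + 1)) μ)
    (hθqhat : Integrable (snellCashflow T G qhat (s + 1)) μ)
    (hq : q s =ᵐ[μ] μ[snellCashflow T G q (s + 1) | m]) (h : s < T) {p : ENNReal} (hp : 1 ≤ p) :
    eLpNorm μ[snellCashflow T G q s - snellCashflow T G qhat s | m] p μ ≤
      eLpNorm (qhat s - q s) p μ +
        eLpNorm μ[snellCashflow T G q (s + 1) - snellCashflow T G qhat (s + 1) | m] p μ := by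
  rw [eLpNorm_congr_ae (condExp_snellCashflow_sub_of_lt hm hGm hqm hqhatm hG hθq hθqhat hq h)]
  refine (eLpNorm_add_le ?_ ?_ hp).trans (add_le_add ?_ ?_)
  · exact (((hqm.ite_le hGm 1 0).sub (hqhatm.ite_le hGm 1 0)).mul (hGm.sub hqm)).mono hm
      |>.aestronglyMeasurable
  · exact (hqhatm.ite_le hGm 0 1).mul stronglyMeasurable_condExp |>.mono hm
      |>.aestronglyMeasurable
  · exact eLpNorm_mono fun ω => abs_ite_le_sub_ite_le_mul_sub_le (G s ω) (q s ω) (qhat s ω)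
  · refine eLpNorm_mono fun ω => ?_
    simp only [Pi.mul_apply, norm_mul]
    split_ifs <;> simp

theorem eLpNorm_condExp_snellCashflow_sub_le [IsFiniteMeasure μ] {ℱ : ℕ → MeasurableSpace Ω}
    (hℱ : ∀ u, ℱ u ≤ mΩ) (hmono : Monotone ℱ) (hGm : ∀ u, StronglyMeasurable[ℱ u] (G u))
    (hqm : ∀ u, StronglyMeasurable[ℱ u] (q u)) (hqhatm : ∀ u, StronglyMeasurable[ℱ u] (qhat u))
    (hG : ∀ u, Integrable (G u) μ)
    (hq : ∀ u < T, q u =ᵐ[μ] μ[snellCashflow T G q (u + 1) | ℱ u]) {p : ENNReal} (hp : 1 ≤ p)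
    (s : ℕ) :
    eLpNorm μ[snellCashflow T G q s - snellCashflow T G qhat s | ℱ s] p μ ≤
      ∑ u ∈ Icc s T, eLpNorm (qhat u - q u) p μ := by
  by_cases h : s < T
  · have hθ (r : ℕ → Ω → ℝ) (hr : ∀ u, StronglyMeasurable[ℱ u] (r u)) :
        Integrable (snellCashflow T G r (s + 1)) μ :=
      integrable_snellCashflow (fun u => ((hGm u).mono (hℱ u)).measurable)
        (fun u => ((hr u).mono (hℱ u)).measurable) hG (s + 1)
    calc _ ≤ eLpNorm (qhat s - q s) p μ +
          eLpNorm μ[snellCashflow T G q (s + 1) - snellCashflow T G qhat (s + 1) | ℱ s] p μ :=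
          eLpNorm_condExp_snellCashflow_sub_le_of_lt (hℱ s) (hGm s) (hqm s) (hqhatm s) (hG s)
            (hθ q hqm) (hθ qhat hqhatm) (hq s h) h hp
      _ ≤ eLpNorm (qhat s - q s) p μ + eLpNorm μ[snellCashflow T G q (s + 1) -
            snellCashflow T G qhat (s + 1) | ℱ (s + 1)] p μ := by
          gcongr
          exact eLpNorm_condExp_le_of_le (hmono s.le_succ) (hℱ _) _ hp
      _ ≤ eLpNorm (qhat s - q s) p μ + ∑ u ∈ Icc (s + 1) T, eLpNorm (qhat u - q u) p μ := by
          gcongr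
          exact eLpNorm_condExp_snellCashflow_sub_le hℱ hmono hGm hqm hqhatm hG hq hp (s + 1)
      _ = ∑ u ∈ Icc s T, eLpNorm (qhat u - q u) p μ := by
          rw [Icc_add_one_left_eq_Ioc, Icc_eq_cons_Ioc h.le, sum_cons]
  · rw [snellCashflow_of_le (not_lt.mp h), snellCashflow_of_le (not_lt.mp h), sub_self,
      condExp_zero, eLpNorm_zero]
    exact zero_le
termination_by T - s

end snellCashflow

theorem cashflow_error_propagation_general
    {Ω : Type*} {mΩ : MeasurableSpace Ω} {μ : Measure Ω} [IsProbabilityMeasure μ]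
    (T t : ℕ)
    (ℱ : ℕ → MeasurableSpace Ω) (hℱ : ∀ s, ℱ s ≤ mΩ) (hmono : Monotone ℱ)
    (G q qhat : ℕ → Ω → ℝ)
    (hGmeas : ∀ s, StronglyMeasurable[ℱ s] (G s))
    (hqmeas : ∀ s, StronglyMeasurable[ℱ s] (q s))
    (hqhatmeas : ∀ s, StronglyMeasurable[ℱ s] (qhat s))
    (hGint : ∀ s, Integrable (G s) μ)
    (hq : ∀ s ≤ T, q s =ᵐ[μ] μ[snellCashflow T G q (s + 1) | ℱ s]) :
    ∀ p : ℝ, 1 < p →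
      eLpNorm (μ[fun ω => snellCashflow T G q (t + 1) ω
            - snellCashflow T G qhat (t + 1) ω | ℱ t]) (ENNReal.ofReal p) μ
        ≤ ∑ s ∈ Finset.Icc (t + 1) T,
            eLpNorm (fun ω => qhat s ω - q s ω) (ENNReal.ofReal p) μ := by
  intro p hp
  have hp' : 1 ≤ ENNReal.ofReal p := ENNReal.one_le_ofReal.mpr hp.le
  exact (eLpNorm_condExp_le_of_le (hmono t.le_succ) (hℱ _) _ hp').trans
    (eLpNorm_condExp_snellCashflow_sub_le hℱ hmono hGmeas hqmeas hqhatmeas hGint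
      (fun s hs => hq s hs.le) hp' (t + 1))

/-- Lemma scE-4 (error propagation for threshold stopping rules): if `q` is the true
continuation-value process, `q_s = E[θ_{s+1}(q) | F_s]`, and `q̂` an arbitrary adapted
threshold process, then for every `p > 1`,
`‖E[θ_{t+1}(q) − θ_{t+1}(q̂) | F_t]‖_p ≤ Σ_{s=t+1}^T ‖q̂_s − q_s‖_p`. -/
theorem cashflow_error_propagation
    {Ω : Type*} {mΩ : MeasurableSpace Ω} {μ : Measure Ω} [IsProbabilityMeasure μ]
    (T t : ℕ) (htT : t < T)
    (ℱ : ℕ → MeasurableSpace Ω) (hℱ : ∀ s, ℱ s ≤ mΩ) (hmono : Monotone ℱ)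
    (G q qhat : ℕ → Ω → ℝ)
    (hGmeas : ∀ s, StronglyMeasurable[ℱ s] (G s))
    (hqmeas : ∀ s, StronglyMeasurable[ℱ s] (q s))
    (hqhatmeas : ∀ s, StronglyMeasurable[ℱ s] (qhat s))
    (hGint : ∀ s, Integrable (G s) μ)
    (hqint : ∀ s, Integrable (q s) μ) (hqhatint : ∀ s, Integrable (qhat s) μ)
    (hq : ∀ s ≤ T, q s =ᵐ[μ] μ[snellCashflow T G q (s + 1) | ℱ s]) :
    ∀ p : ℝ, 1 < p →
      eLpNorm (μ[fun ω => snellCashflow T G q (t + 1) ω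
            - snellCashflow T G qhat (t + 1) ω | ℱ t]) (ENNReal.ofReal p) μ
        ≤ ∑ s ∈ Finset.Icc (t + 1) T,
            eLpNorm (fun ω => qhat s ω - q s ω) (ENNReal.ofReal p) μ :=
  cashflow_error_propagation_general T t ℱ hℱ hmono G q qhat hGmeas hqmeas hqhatmeas hGint hq
end

section
/- Let (F_t)_{t=0,...,T} be a discrete filtration, (G_t) adapted and integrable, q = (q_t) the true continuation values with q_t = E[θ_{t+1}(q)|F_t], where θ_t(q) = Σ_{s=t}^T G_s · 1{q_t > G_t, …, q_{s−1} > G_{s−1}, q_s ≤ G_s} (with θ_T = G_T). Then for any adapted threshold process q' (defining a stopping rule τ' via τ'_t = min{s ≥ t : q'_s ≤ G_s}), E[θ_t(q')] ≤ E[θ_t(q)], i.e., the cashflow generated by the true continuation-value thresholds is optimal among all threshold stopping rules. -/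
open MeasureTheory

theorem MeasureTheory.condExp_piecewise {Ω : Type*} {m mΩ : MeasurableSpace Ω} {μ : Measure Ω}
    {A : Set Ω} [DecidablePred (· ∈ A)] (hA : MeasurableSet[m] A) {f g : Ω → ℝ}
    (hf : Integrable f μ) (hg : Integrable g μ) (hm : m ≤ mΩ) :
    μ[A.piecewise f g | m] =ᵐ[μ] A.piecewise (μ[f | m]) (μ[g | m]) := by
  rw [← Set.indicator_add_compl_eq_piecewise, ← Set.indicator_add_compl_eq_piecewise]
  exact (condExp_add (hf.indicator (hm A hA)) (hg.indicator (hm Aᶜ hA.compl)) m).trans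
    ((condExp_indicator hf hA).add (condExp_indicator hg hA.compl))

theorem MeasureTheory.condExp_mono_of_condExp_le {Ω : Type*} {m m' mΩ : MeasurableSpace Ω}
    {μ : Measure Ω} (hm : m ≤ m') (hm' : m' ≤ mΩ) [SigmaFinite (μ.trim hm')] {f g : Ω → ℝ}
    (hfg : μ[f | m'] ≤ᵐ[μ] μ[g | m']) : μ[f | m] ≤ᵐ[μ] μ[g | m] :=
  calc μ[f | m] =ᵐ[μ] μ[μ[f | m'] | m] := (condExp_condExp_of_le hm hm').symm
    _ ≤ᵐ[μ] μ[μ[g | m'] | m] := condExp_mono integrable_condExp integrable_condExp hfg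
    _ =ᵐ[μ] μ[g | m] := condExp_condExp_of_le hm hm'

namespace snellCashflow

variable {Ω : Type*} {T s : ℕ} {G p q : ℕ → Ω → ℝ}

theorem eq_piecewise (hs : s < T) :
    snellCashflow T G p s = {ω | p s ω ≤ G s ω}.piecewise (G s) (snellCashflow T G p (s + 1)) := by
  funext ω
  rw [snellCashflow]
  simp [hs, Set.piecewise]

theorem eq_of_le (hs : T ≤ s) : snellCashflow T G p s = G T := by
  funext ω
  rw [snellCashflow]
  simp [Nat.not_lt.2 hs]

variable {mΩ : MeasurableSpace Ω} {μ : Measure Ω}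

theorem integrable (hA : ∀ s, MeasurableSet {ω | p s ω ≤ G s ω}) (hG : ∀ s, Integrable (G s) μ)
    (s : ℕ) : Integrable (snellCashflow T G p s) μ := by
  induction hd : T - s generalizing s with
  | zero => rw [eq_of_le (by omega)]; exact hG T
  | succ d ih =>
    rw [eq_piecewise (by omega)]
    exact .piecewise (hA s) (hG s).integrableOn (ih (s + 1) (by omega)).integrableOn

variable {ℱ : Filtration ℕ mΩ} [IsFiniteMeasure μ]

theorem condExp_eq_piecewise (hG : Adapted ℱ G) (hGint : ∀ s, Integrable (G s) μ)
    (hp : Adapted ℱ p) (hs : s < T) :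
    μ[snellCashflow T G p s | ℱ s] =ᵐ[μ]
      {ω | p s ω ≤ G s ω}.piecewise (G s) (μ[snellCashflow T G p (s + 1) | ℱ s]) := by
  have hA : ∀ s, MeasurableSet[ℱ s] {ω | p s ω ≤ G s ω} := fun s => measurableSet_le (hp s) (hG s)
  have hθ := integrable (T := T) (fun s => ℱ.le s _ (hA s)) hGint (s + 1)
  rw [eq_piecewise hs]
  convert condExp_piecewise (hA s) (hGint s) hθ (ℱ.le s) using 2
  exact (condExp_of_stronglyMeasurable (ℱ.le s) (hG s).stronglyMeasurable (hGint s)).symm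

theorem condExp_eq_max (hG : Adapted ℱ G) (hGint : ∀ s, Integrable (G s) μ)
    (hq : Adapted ℱ q) (hs : s < T) (hqs : q s =ᵐ[μ] μ[snellCashflow T G q (s + 1) | ℱ s]) :
    μ[snellCashflow T G q s | ℱ s] =ᵐ[μ] fun ω => max (G s ω) (q s ω) := by
  filter_upwards [condExp_eq_piecewise hG hGint hq hs, hqs] with ω hθ hqω
  rw [hθ]
  by_cases hω : q s ω ≤ G s ω
  · simp [Set.piecewise, hω]
  · simp [Set.piecewise, hω, ← hqω, (not_le.1 hω).le]

theorem condExp_le (hG : Adapted ℱ G) (hGint : ∀ s, Integrable (G s) μ)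
    (hp : Adapted ℱ p) (hq : Adapted ℱ q)
    (hqT : ∀ s < T, q s =ᵐ[μ] μ[snellCashflow T G q (s + 1) | ℱ s]) (s : ℕ) :
    μ[snellCashflow T G p s | ℱ s] ≤ᵐ[μ] μ[snellCashflow T G q s | ℱ s] := by
  induction hd : T - s generalizing s with
  | zero => rw [eq_of_le (by omega), eq_of_le (by omega)]
  | succ d ih =>
    have hs : s < T := by omega
    have hcont : μ[snellCashflow T G p (s + 1) | ℱ s] ≤ᵐ[μ] q s :=
      (condExp_mono_of_condExp_le (ℱ.mono s.le_succ) (ℱ.le _) (ih (s + 1) (by omega))).trans_eq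
        (hqT s hs).symm
    filter_upwards [condExp_eq_piecewise hG hGint hp hs, condExp_eq_max hG hGint hq hs (hqT s hs),
      hcont] with ω hθp hθq hcontω
    rw [hθp, hθq]
    by_cases hω : p s ω ≤ G s ω
    · simp [Set.piecewise, hω]
    · simp [Set.piecewise, hω, hcontω]

end snellCashflow

theorem true_threshold_cashflow_optimal_general
    {Ω : Type*} {mΩ : MeasurableSpace Ω} (μ : Measure Ω) [IsProbabilityMeasure μ]
    (ℱ : ℕ → MeasurableSpace Ω) (hℱ : ∀ s, ℱ s ≤ mΩ) (hmono : Monotone ℱ)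
    (T t : ℕ) (G q q' : ℕ → Ω → ℝ)
    (hGmeas : ∀ s, StronglyMeasurable[ℱ s] (G s))
    (hqmeas : ∀ s, StronglyMeasurable[ℱ s] (q s))
    (hq'meas : ∀ s, StronglyMeasurable[ℱ s] (q' s))
    (hGint : ∀ s, Integrable (G s) μ)
    (hq : ∀ s ≤ T, q s =ᵐ[μ] μ[snellCashflow T G q (s + 1) | ℱ s]) :
    (∫ ω, snellCashflow T G q' t ω ∂μ) ≤ ∫ ω, snellCashflow T G q t ω ∂μ := by
  let 𝔽 : Filtration ℕ mΩ := ⟨ℱ, hmono, hℱ⟩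
  have hle := snellCashflow.condExp_le (ℱ := 𝔽) (fun s => (hGmeas s).measurable) hGint
    (fun s => (hq'meas s).measurable) (fun s => (hqmeas s).measurable)
    (fun s hs => hq s hs.le) t
  calc ∫ ω, snellCashflow T G q' t ω ∂μ = ∫ ω, (μ[snellCashflow T G q' t | ℱ t]) ω ∂μ :=
        (integral_condExp (hℱ t)).symm
    _ ≤ ∫ ω, (μ[snellCashflow T G q t | ℱ t]) ω ∂μ :=
        integral_mono_ae integrable_condExp integrable_condExp hle
    _ = ∫ ω, snellCashflow T G q t ω ∂μ := integral_condExp (hℱ t)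

/-- Optimality of the true continuation-value thresholds: if `q` satisfies the
dynamic-programming relation `q_s = E[θ_{s+1}(q) | F_s]`, then the expected cashflow from
the threshold rule `q` dominates that of any other adapted threshold process `q'`:
`E[θ_t(q')] ≤ E[θ_t(q)]`. -/
theorem true_threshold_cashflow_optimal
    {Ω : Type*} {mΩ : MeasurableSpace Ω} (μ : Measure Ω) [IsProbabilityMeasure μ]
    (ℱ : ℕ → MeasurableSpace Ω) (hℱ : ∀ s, ℱ s ≤ mΩ) (hmono : Monotone ℱ)
    (T t : ℕ) (htT : t ≤ T) (G q q' : ℕ → Ω → ℝ)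
    (hGmeas : ∀ s, StronglyMeasurable[ℱ s] (G s))
    (hqmeas : ∀ s, StronglyMeasurable[ℱ s] (q s))
    (hq'meas : ∀ s, StronglyMeasurable[ℱ s] (q' s))
    (hGint : ∀ s, Integrable (G s) μ) (hqint : ∀ s, Integrable (q s) μ)
    (hq : ∀ s ≤ T, q s =ᵐ[μ] μ[snellCashflow T G q (s + 1) | ℱ s]) :
    (∫ ω, snellCashflow T G q' t ω ∂μ) ≤ ∫ ω, snellCashflow T G q t ω ∂μ :=
  true_threshold_cashflow_optimal_general μ ℱ hℱ hmono T t G q q' hGmeas hqmeas hq'meas hGint hq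
end

section
/- Let (F_t)_{t=0,...,T} be a discrete filtration, (G_t) adapted and square-integrable, and define recursively the Tsitsiklis–van Roy iterates q_T = 0, q_t = E[max(G_{t+1}, q_{t+1}) | F_t], and perturbed iterates q̂_T = 0, q̂_t satisfying ‖q̂_t − E[max(G_{t+1}, q̂_{t+1}) | F_t]‖₂ ≤ ε_t. Then ‖q̂_t − q_t‖₂ ≤ Σ_{s=t}^{T−1} ε_s. -/
/-!
Conditional expectation is a contraction in `L²` and `x ↦ max(G, x)` is pointwise 1-Lipschitz, so
`‖E[max(G_{t+1}, q̂_{t+1}) | F_t] − q_t‖₂ ≤ ‖q̂_{t+1} − q_{t+1}‖₂`. By the triangle inequality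
each step of the backward recursion adds at most `ε_t` to the error, which therefore grows
linearly rather than exponentially in the horizon.
-/

open MeasureTheory Finset
open scoped ENNReal

/-- The Tsitsiklis–van Roy backward iterates: `q_T = 0`,
`q_t = E[max(G_{t+1}, q_{t+1}) | F_t]` for `t < T`. -/
noncomputable def tvrIterate {Ω : Type*} [mΩ : MeasurableSpace Ω] (μ : Measure Ω)
    (ℱ : ℕ → MeasurableSpace Ω) (T : ℕ) (G : ℕ → Ω → ℝ) : ℕ → Ω → ℝ
  | t =>
    if _ : t < T then
      μ[fun ω => max (G (t + 1) ω) (tvrIterate μ ℱ T G (t + 1) ω) | ℱ t]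
    else 0
  termination_by t => T - t
  decreasing_by omega

theorem le_add_sum_Ico_of_le_add {α : Type*} [AddCommMonoid α] [PartialOrder α]
    [IsOrderedAddMonoid α] {d e : ℕ → α} {t T : ℕ} (ht : t ≤ T)
    (hstep : ∀ s < T, d s ≤ e s + d (s + 1)) :
    d t ≤ d T + ∑ s ∈ Ico t T, e s := by
  induction ht using Nat.decreasingInduction with
  | self => simp
  | of_succ s hs ih =>
    calc d s ≤ e s + d (s + 1) := hstep s hs
      _ ≤ e s + (d T + ∑ r ∈ Ico (s + 1) T, e r) := by gcongr
      _ = d T + ∑ r ∈ Ico s T, e r := by rw [sum_eq_sum_Ico_succ_bot hs]; abel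

namespace MeasureTheory

variable {α : Type*} {m m0 : MeasurableSpace α} {μ : Measure α}

theorem eLpNorm_condExp_sub_condExp_le {E : Type*} [NormedAddCommGroup E] [NormedSpace ℝ E]
    [CompleteSpace E] {f g : α → E} (hf : Integrable f μ) (hg : Integrable g μ)
    {p : ℝ≥0∞} (hp : 1 ≤ p) :
    eLpNorm (μ[f | m] - μ[g | m]) p μ ≤ eLpNorm (f - g) p μ := by
  rw [← eLpNorm_congr_ae (condExp_sub hf hg m)]
  exact eLpNorm_condExp_le_eLpNorm _ hp

theorem eLpNorm_condExp_max_sub_condExp_max_le [IsFiniteMeasure μ] {h f g : α → ℝ}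
    {p : ℝ≥0∞} (hp : 1 ≤ p) (hh : MemLp h p μ) (hf : MemLp f p μ) (hg : MemLp g p μ) :
    eLpNorm (μ[fun x => max (h x) (f x) | m] - μ[fun x => max (h x) (g x) | m]) p μ
      ≤ eLpNorm (f - g) p μ := by
  refine (eLpNorm_condExp_sub_condExp_le ((hh.sup hf).integrable hp)
    ((hh.sup hg).integrable hp) hp).trans (eLpNorm_mono fun x => ?_)
  simpa only [Pi.sub_apply, Pi.sup_apply, Real.norm_eq_abs, max_comm (h x)]
    using abs_max_sub_max_le_abs (f x) (g x) (h x)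

end MeasureTheory

section TsitsiklisVanRoy

variable {Ω : Type*} {mΩ : MeasurableSpace Ω} {μ : Measure Ω} {ℱ : ℕ → MeasurableSpace Ω}
  {T t : ℕ} {G : ℕ → Ω → ℝ}

theorem tvrIterate_of_lt (ht : t < T) :
    tvrIterate μ ℱ T G t = μ[fun ω => max (G (t + 1) ω) (tvrIterate μ ℱ T G (t + 1) ω) | ℱ t] := by
  rw [tvrIterate, dif_pos ht]

theorem tvrIterate_of_le (ht : T ≤ t) : tvrIterate μ ℱ T G t = 0 := by
  rw [tvrIterate, dif_neg (not_lt.2 ht)]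

theorem memLp_tvrIterate {p : ℝ≥0∞} (hp : 1 ≤ p) (hG : ∀ s, MemLp (G s) p μ) (t : ℕ) :
    MemLp (tvrIterate μ ℱ T G t) p μ := by
  rcases lt_or_ge t T with ht | ht
  · rw [tvrIterate_of_lt ht]
    exact ((hG (t + 1)).sup (memLp_tvrIterate hp hG (t + 1))).condExp hp
  · rw [tvrIterate_of_le ht]
    exact MemLp.zero
termination_by T - t

theorem eLpNorm_sub_tvrIterate_le [IsFiniteMeasure μ] {p : ℝ≥0∞} (hp : 1 ≤ p)
    (hG : ∀ s, MemLp (G s) p μ) {q : ℕ → Ω → ℝ} (hq : ∀ s, MemLp (q s) p μ) (ht : t < T) :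
    eLpNorm (q t - tvrIterate μ ℱ T G t) p μ
      ≤ eLpNorm (q t - μ[fun ω => max (G (t + 1) ω) (q (t + 1) ω) | ℱ t]) p μ
        + eLpNorm (q (t + 1) - tvrIterate μ ℱ T G (t + 1)) p μ := by
  rw [← sub_add_sub_cancel (q t) (μ[fun ω => max (G (t + 1) ω) (q (t + 1) ω) | ℱ t]),
    tvrIterate_of_lt ht]
  refine (eLpNorm_add_le ((hq t).aestronglyMeasurable.sub integrable_condExp.aestronglyMeasurable)
    (integrable_condExp.aestronglyMeasurable.sub integrable_condExp.aestronglyMeasurable) hp).trans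
    (add_le_add_right ?_ _)
  exact eLpNorm_condExp_max_sub_condExp_max_le hp (hG _) (hq _) (memLp_tvrIterate hp hG _)

end TsitsiklisVanRoy

theorem tvr_linear_error_propagation_general
    {Ω : Type*} {mΩ : MeasurableSpace Ω} (μ : Measure Ω) [IsProbabilityMeasure μ]
    (ℱ : ℕ → MeasurableSpace Ω)
    (T : ℕ) (G : ℕ → Ω → ℝ)
    (hGL2 : ∀ s, MemLp (G s) 2 μ)
    (qhat : ℕ → Ω → ℝ)
    (hqhatL2 : ∀ s, MemLp (qhat s) 2 μ)
    (ε : ℕ → ℝ) (hε : ∀ s, 0 ≤ ε s)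
    (hqhatT : qhat T = 0)
    (hrec : ∀ t < T,
      eLpNorm (fun ω => qhat t ω
          - (μ[fun ω' => max (G (t + 1) ω') (qhat (t + 1) ω') | ℱ t]) ω) 2 μ
        ≤ ENNReal.ofReal (ε t)) :
    ∀ t ≤ T, eLpNorm (fun ω => qhat t ω - tvrIterate μ ℱ T G t ω) 2 μ
        ≤ ENNReal.ofReal (∑ s ∈ Finset.Ico t T, ε s) := by
  intro t ht
  have hstep : ∀ s < T, eLpNorm (qhat s - tvrIterate μ ℱ T G s) 2 μ
      ≤ ENNReal.ofReal (ε s) + eLpNorm (qhat (s + 1) - tvrIterate μ ℱ T G (s + 1)) 2 μ :=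
    fun s hs => (eLpNorm_sub_tvrIterate_le one_le_two hGL2 hqhatL2 hs).trans
      (add_le_add_left (hrec s hs) _)
  have hterminal : qhat T - tvrIterate μ ℱ T G T = 0 := by
    rw [hqhatT, tvrIterate_of_le le_rfl, sub_zero]
  calc eLpNorm (qhat t - tvrIterate μ ℱ T G t) 2 μ
      ≤ eLpNorm (qhat T - tvrIterate μ ℱ T G T) 2 μ + ∑ s ∈ Ico t T, ENNReal.ofReal (ε s) :=
        le_add_sum_Ico_of_le_add ht hstep
    _ = ENNReal.ofReal (∑ s ∈ Ico t T, ε s) := by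
        rw [hterminal, eLpNorm_zero, zero_add, ENNReal.ofReal_sum_of_nonneg fun s _ => hε s]

/-- Linear error propagation for the Tsitsiklis–van Roy recursion: if the perturbed
iterates `q̂` satisfy `q̂_T = 0` and
`‖q̂_t − E[max(G_{t+1}, q̂_{t+1}) | F_t]‖₂ ≤ ε_t`, then
`‖q̂_t − q_t‖₂ ≤ Σ_{s=t}^{T−1} ε_s`. -/
theorem tvr_linear_error_propagation
    {Ω : Type*} {mΩ : MeasurableSpace Ω} (μ : Measure Ω) [IsProbabilityMeasure μ]
    (ℱ : ℕ → MeasurableSpace Ω) (hℱ : ∀ s, ℱ s ≤ mΩ) (hmono : Monotone ℱ)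
    (T : ℕ) (G : ℕ → Ω → ℝ)
    (hGmeas : ∀ s, StronglyMeasurable[ℱ s] (G s))
    (hGL2 : ∀ s, MemLp (G s) 2 μ)
    (qhat : ℕ → Ω → ℝ) (hqhatmeas : ∀ s, StronglyMeasurable[ℱ s] (qhat s))
    (hqhatL2 : ∀ s, MemLp (qhat s) 2 μ)
    (ε : ℕ → ℝ) (hε : ∀ s, 0 ≤ ε s)
    (hqhatT : qhat T = 0)
    (hrec : ∀ t < T,
      eLpNorm (fun ω => qhat t ω
          - (μ[fun ω' => max (G (t + 1) ω') (qhat (t + 1) ω') | ℱ t]) ω) 2 μ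
        ≤ ENNReal.ofReal (ε t)) :
    ∀ t ≤ T, eLpNorm (fun ω => qhat t ω - tvrIterate μ ℱ T G t ω) 2 μ
        ≤ ENNReal.ofReal (∑ s ∈ Finset.Ico t T, ε s) :=
  tvr_linear_error_propagation_general (mΩ := mΩ) μ ℱ T G hGL2 qhat hqhatL2 ε hε hqhatT hrec
end
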